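/- If the discrete divergence coefficients satisfy first-order consistency Σ_{J∈H_I} (X_J − X_I) γ_{IJ}ᵀ = I (the d×d identity), then for any affine stress field P(X) = P₀ + L(X − X_I) with L a linear matrix-valued map, the base nonlocal divergence Σ_{J∈H_I} (P(X_J) − P(X_I)) γ_{IJ} equals the exact divergence (∇·P)(X_I). -/

import Mathlib

/-!
Since `P` is affine, `P (X J) - P (X I) = L (X J - X I)`. The map `(v, w) ↦ L v *ᵥ w` is
bilinear, so it factors through the outer product `vecMulVec v w`; summing over `J`, the
nonlocal divergence becomes the contraction of `L` against `∑ J, vecMulVec (X J - X I) (γ J)`,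
which is `1` by consistency. Contracting against `1` gives `i ↦ ∑ j, L (Pi.single j 1) i j`,
the divergence of the affine field, since `∂P_{ij}/∂x_j = (L e_j)_{ij}`.
-/

open Matrix Finset

theorem LinearMap.mulVec_eq_sum_vecMulVec {m n o R : Type*} [CommSemiring R] [Fintype n]
    [DecidableEq n] [Fintype o] (L : (n → R) →ₗ[R] Matrix m o R) (v : n → R) (w : o → R) :
    L v *ᵥ w = fun i => ∑ j, ∑ k, L (Pi.single j 1) i k * vecMulVec v w j k := by
  conv_lhs => rw [pi_eq_sum_univ' v, map_sum]
  funext i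
  simp only [map_smul, Matrix.sum_apply, Matrix.smul_apply, smul_eq_mul, mulVec, dotProduct,
    vecMulVec_apply, Finset.sum_mul]
  rw [Finset.sum_comm]
  exact Finset.sum_congr rfl fun j _ => Finset.sum_congr rfl fun k _ => by ring

theorem LinearMap.sum_mulVec_eq_sum_vecMulVec {ι m n o R : Type*} [CommSemiring R] [Fintype n]
    [DecidableEq n] [Fintype o] (L : (n → R) →ₗ[R] Matrix m o R) (s : Finset ι)
    (v : ι → n → R) (w : ι → o → R) :
    ∑ J ∈ s, L (v J) *ᵥ w J
      = fun i => ∑ j, ∑ k, L (Pi.single j 1) i k * (∑ J ∈ s, vecMulVec (v J) (w J)) j k := by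
  simp only [L.mulVec_eq_sum_vecMulVec]
  funext i
  simp only [Finset.sum_apply, Matrix.sum_apply, Finset.mul_sum]
  rw [Finset.sum_comm]
  exact Finset.sum_congr rfl fun j _ => Finset.sum_comm

/-- If the discrete coefficients satisfy first-order consistency
`∑_{J∈H_I} (X_J − X_I) γ_{IJ}ᵀ = I`, then for any affine stress field
`P(X) = P₀ + L(X − X_I)` (with `L` a linear matrix-valued map), the base
nonlocal divergence `∑_{J∈H_I} (P(X_J) − P(X_I)) γ_{IJ}` equals the exact
divergence `(∇·P)(X_I)`, whose `i`-th component is `∑_j (L e_j)_{ij}`. -/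
theorem nonlocal_divergence_exact_on_affine {ι : Type*} (d : ℕ)
    (H : Finset ι) (X : ι → (Fin d → ℝ)) (γ : ι → (Fin d → ℝ)) (I : ι)
    (hcons : ∑ J ∈ H, vecMulVec (X J - X I) (γ J) = (1 : Matrix (Fin d) (Fin d) ℝ))
    (P₀ : Matrix (Fin d) (Fin d) ℝ)
    (L : (Fin d → ℝ) →ₗ[ℝ] Matrix (Fin d) (Fin d) ℝ)
    (P : (Fin d → ℝ) → Matrix (Fin d) (Fin d) ℝ)
    (hP : ∀ x, P x = P₀ + L (x - X I)) :
    ∑ J ∈ H, (P (X J) - P (X I)).mulVec (γ J)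
      = fun i => ∑ j, L (Pi.single j 1) i j := by
  have hincrement : ∀ J, P (X J) - P (X I) = L (X J - X I) := fun J => by simp [hP]
  simp only [hincrement, L.sum_mulVec_eq_sum_vecMulVec, hcons, one_apply, mul_ite, mul_one,
    mul_zero, Finset.sum_ite_eq, Finset.mem_univ, if_true]
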